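/- Let $d$ be the dominant-coweight-valued distance on lattices in $\mathcal{K}^n$ (defined by invariant factors), and define the partial order on the coweight lattice $\mathbb{Z}^n$ by $\lambda \geq \mu$ iff $\lambda - \mu$ is a nonnegative integer combination of positive coroots $e_i - e_{i+1}$ plus possibly a multiple of $(1,\ldots,1)$ matching total degree. Then for any lattices $L, M, N$: $d(L,N) \leq d(L,M) + d(M,N)$ in this partial order. -/

import Mathlib

noncomputable section

/-- A lattice in `K^n`, `K = F((t))`. -/
def IsLattice {F : Type*} [Field F] {n : ℕ}
    (L : Submodule (PowerSeries F) (Fin n → LaurentSeries F)) : Prop :=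
  L.FG ∧ Submodule.span (LaurentSeries F) (L : Set (Fin n → LaurentSeries F)) = ⊤

/-- The standard lattice `O^n`. -/
def stdLattice (F : Type*) [Field F] (n : ℕ) :
    Submodule (PowerSeries F) (Fin n → LaurentSeries F) :=
  Submodule.span (PowerSeries F)
    (Set.range fun i => Pi.single i (1 : LaurentSeries F))

/-- The diagonal lattice spanned by `t^{-a i} e i`. -/
def diagLattice {F : Type*} [Field F] {n : ℕ} (a : Fin n → ℤ) :
    Submodule (PowerSeries F) (Fin n → LaurentSeries F) :=
  Submodule.span (PowerSeries F)
    (Set.range fun i => Pi.single i (HahnSeries.single (-(a i)) (1 : F)))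

/-- The image of a lattice under `g ∈ GL_n(K)`. -/
def mapGL {F : Type*} [Field F] {n : ℕ}
    (g : GL (Fin n) (LaurentSeries F))
    (L : Submodule (PowerSeries F) (Fin n → LaurentSeries F)) :
    Submodule (PowerSeries F) (Fin n → LaurentSeries F) :=
  Submodule.map ((Matrix.toLin' (g : Matrix (Fin n) (Fin n) (LaurentSeries F))).restrictScalars
    (PowerSeries F)) L

/-! Put `D_a = diag(t^{-a_1}, …, t^{-a_n})`. The three diagonalisations combine to
`D_c = k₀ (D_a k₁ D_b) k₂` with `k₀, k₁, k₂ ∈ GL_n(𝒪)`. Since `a` and `b` are decreasing, every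
`l × l` minor of `D_a k₁ D_b` has valuation at least `-(a_1 + ⋯ + a_l) - (b_1 + ⋯ + b_l)`, and by
the Cauchy–Binet expansion multiplying by matrices over `𝒪` preserves such a lower bound. The
leading `l × l` minor of `D_c` has valuation `-(c_1 + ⋯ + c_l)`. For `l = n` the bound is an
equality, because determinants of elements of `GL_n(𝒪)` have valuation `0`. -/

open Matrix Finset

theorem Fin.val_le_val_of_strictMono {l n : ℕ} {φ : Fin l → Fin n} (hφ : StrictMono φ)
    (i : Fin l) : (i : ℕ) ≤ φ i := by
  simpa using card_le_card_of_injOn φ (s := Iio i) (t := Iio (φ i))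
    (fun j hj => by simpa using hφ (by simpa using hj)) hφ.injective.injOn

theorem Fin.sum_filter_val_lt {M : Type*} [AddCommMonoid M] {l n : ℕ} (hl : l ≤ n)
    (f : Fin n → M) :
    ∑ m ∈ univ.filter (fun m : Fin n => (m : ℕ) < l), f m = ∑ i : Fin l, f (Fin.castLE hl i) := by
  have : univ.filter (fun m : Fin n => (m : ℕ) < l) = univ.map (Fin.castLEEmb hl) := by
    ext m
    simpa using ⟨fun h => ⟨⟨m, h⟩, rfl⟩, by rintro ⟨i, rfl⟩; exact i.isLt⟩
  rw [this, sum_map]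
  rfl

theorem Monotone.sum_castLE_le_sum_comp {Γ : Type*} [AddCommMonoid Γ] [PartialOrder Γ]
    [IsOrderedAddMonoid Γ] {l n : ℕ} {f : Fin n → Γ} (hf : Monotone f) (hl : l ≤ n)
    {r : Fin l → Fin n} (hr : Function.Injective r) :
    ∑ i, f (Fin.castLE hl i) ≤ ∑ i, f (r i) := by
  classical
  have hS : #(univ.image r) = l := by rw [card_image_of_injective _ hr, card_fin]
  set e := (univ.image r).orderEmbOfFin hS
  calc ∑ i, f (Fin.castLE hl i)
      ≤ ∑ i, f (e i) := sum_le_sum fun i _ => hf (Fin.val_le_val_of_strictMono e.strictMono i)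
    _ = ∑ m ∈ univ.image r, f m := by
      rw [← map_orderEmbOfFin_univ _ hS, sum_map]; rfl
    _ = ∑ i, f (r i) := sum_image hr.injOn

namespace Matrix

variable {R : Type*} [CommRing R]

theorem det_submatrix_mul {ι m n o : Type*} [Fintype ι] [DecidableEq ι] [Fintype n]
    (k : Matrix m n R) (A : Matrix n o R) (r : ι → m) (t : ι → o) :
    ((k * A).submatrix r t).det = ∑ f : ι → n, (∏ i, k (r i) (f i)) * (A.submatrix f t).det := by
  have hrows : (k * A).submatrix r t = fun i => ∑ j, k (r i) j • fun c => A j (t c) := by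
    ext i c
    simp [mul_apply]
  change detRowAlternating _ = _
  rw [hrows]
  refine ((detRowAlternating (R := R)).toMultilinearMap.map_sum _).trans
    (sum_congr rfl fun f _ => ?_)
  exact (detRowAlternating (R := R)).map_smul_univ _ _

end Matrix

namespace AddValuation

variable {R Γ : Type*} [CommRing R] [LinearOrderedAddCommMonoidWithTop Γ] (v : AddValuation R Γ)

theorem map_prod {ι : Type*} (s : Finset ι) (f : ι → R) : v (∏ i ∈ s, f i) = ∑ i ∈ s, v (f i) := by
  classical
  induction s using Finset.induction_on with
  | empty => simp
  | insert j s hj ih => rw [prod_insert hj, sum_insert hj, map_mul, ih]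

theorem map_det_nonneg {m : Type*} [Fintype m] [DecidableEq m] {A : Matrix m m R}
    (hA : ∀ i j, 0 ≤ v (A i j)) : 0 ≤ v A.det := by
  rw [det_apply']
  refine v.map_le_sum fun σ _ => ?_
  rw [map_mul, map_prod]
  refine add_nonneg ?_ (sum_nonneg fun i _ => hA _ _)
  rcases Int.units_eq_one_or (Equiv.Perm.sign σ) with h | h <;> simp [h]

/-- The minors range over all maps `Fin l → m`, not only injective ones; the others vanish. -/
def MinorsGE {m o : Type*} (l : ℕ) (s : Γ) (A : Matrix m o R) : Prop :=
  ∀ (r : Fin l → m) (t : Fin l → o), s ≤ v (A.submatrix r t).det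

variable {v} {l : ℕ} {s : Γ} {m n o : Type*}

theorem MinorsGE.transpose {A : Matrix m o R} (hA : v.MinorsGE l s A) : v.MinorsGE l s Aᵀ :=
  fun r t => by rw [← transpose_submatrix, det_transpose]; exact hA t r

theorem MinorsGE.mul_left [Fintype n] {k : Matrix m n R} {A : Matrix n o R}
    (hk : ∀ i j, 0 ≤ v (k i j)) (hA : v.MinorsGE l s A) : v.MinorsGE l s (k * A) := by
  intro r t
  rw [det_submatrix_mul]
  refine v.map_le_sum fun f _ => ?_
  rw [map_mul, map_prod]
  exact le_add_of_nonneg_of_le (sum_nonneg fun i _ => hk _ _) (hA f t)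

theorem MinorsGE.mul_right [Fintype n] {A : Matrix m n R} {k : Matrix n o R}
    (hA : v.MinorsGE l s A) (hk : ∀ i j, 0 ≤ v (k i j)) : v.MinorsGE l s (A * k) := by
  simpa using ((hA.transpose).mul_left (k := kᵀ) fun i j => hk j i).transpose

theorem minorsGE_diagonal_mul_mul_diagonal {N : ℕ} (hl : l ≤ N) {d e : Fin N → R}
    (hd : Monotone (v ∘ d)) (he : Monotone (v ∘ e)) {Y : Matrix (Fin N) (Fin N) R}
    (hY : ∀ i j, 0 ≤ v (Y i j)) :
    v.MinorsGE l (∑ i, v (d (Fin.castLE hl i)) + ∑ i, v (e (Fin.castLE hl i)))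
      (diagonal d * Y * diagonal e) := by
  intro r t
  by_cases hr : Function.Injective r
  swap
  · obtain ⟨i, j, hij, hne⟩ := Function.not_injective_iff.mp hr
    rw [det_zero_of_row_eq hne (by ext; simp [hij]), map_zero]
    exact le_top
  by_cases ht : Function.Injective t
  swap
  · obtain ⟨i, j, hij, hne⟩ := Function.not_injective_iff.mp ht
    rw [det_zero_of_column_eq hne (by simp [hij]), map_zero]
    exact le_top
  have hsub : (diagonal d * Y * diagonal e).submatrix r t
      = diagonal (d ∘ r) * Y.submatrix r t * diagonal (e ∘ t) := by
    ext; simp [diagonal_mul, mul_diagonal]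
  rw [hsub, det_mul, det_mul, det_diagonal, det_diagonal, map_mul, map_mul, map_prod, map_prod]
  calc _ ≤ ∑ i, v (d (r i)) + ∑ i, v (e (t i)) :=
        add_le_add (hd.sum_castLE_le_sum_comp hl hr) (he.sum_castLE_le_sum_comp hl ht)
    _ ≤ _ := add_le_add (le_add_of_nonneg_right (v.map_det_nonneg fun _ _ => hY _ _)) le_rfl

end AddValuation

open HahnSeries

section LaurentSeries

variable {F : Type*} [Field F] {n : ℕ}

local notation "𝒦" => LaurentSeries F
local notation "𝒪" => PowerSeries F

theorem addVal_single_one (k : ℤ) : addVal ℤ F (HahnSeries.single k (1 : F)) = k := by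
  rw [addVal_apply, orderTop_single one_ne_zero]

theorem addVal_algebraMap_powerSeries_nonneg (p : 𝒪) :
    0 ≤ addVal ℤ F (algebraMap (𝒪) (𝒦) p) := by
  change 0 ≤ addVal ℤ F (ofPowerSeries ℤ F p)
  rw [addVal_apply, ofPowerSeries_apply, orderTop_embDomain]
  cases (toPowerSeries.symm p).orderTop <;> simp

theorem addVal_nonneg_of_mem_stdLattice {x : Fin n → 𝒦} (hx : x ∈ stdLattice F n)
    (i : Fin n) : 0 ≤ addVal ℤ F (x i) := by
  induction hx using Submodule.span_induction with
  | mem x hx =>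
    obtain ⟨j, rfl⟩ := hx
    by_cases hij : i = j
    · subst hij; simp
    · simp [hij]
  | zero => simp
  | add x y _ _ hx hy => exact (addVal ℤ F).map_le_add hx hy
  | smul p x _ hx =>
    rw [Pi.smul_apply, Algebra.smul_def, AddValuation.map_mul]
    exact add_nonneg (addVal_algebraMap_powerSeries_nonneg p) hx

theorem mapGL_mul (g h : GL (Fin n) (𝒦))
    (P : Submodule (𝒪) (Fin n → 𝒦)) :
    mapGL (g * h) P = mapGL g (mapGL h P) := by
  rw [mapGL, mapGL, mapGL, ← Submodule.map_comp]
  congr 1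
  ext
  simp [Matrix.toLin'_mul]

theorem mapGL_one (P : Submodule (𝒪) (Fin n → 𝒦)) :
    mapGL 1 P = P := by
  rw [mapGL]
  convert Submodule.map_id P
  ext
  simp

theorem mapGL_inv_of_eq {g : GL (Fin n) (𝒦)}
    {P Q : Submodule (𝒪) (Fin n → 𝒦)} (h : mapGL g P = Q) :
    mapGL g⁻¹ Q = P := by
  rw [← h, ← mapGL_mul, inv_mul_cancel, mapGL_one]

variable (F n) in
/-- `GL_n(𝒪)`. -/
def stdLatticeStabilizer : Subgroup (GL (Fin n) (𝒦)) where
  carrier := {g | mapGL g (stdLattice F n) = stdLattice F n}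
  mul_mem' {g h} (hg : mapGL g _ = _) (hh : mapGL h _ = _) := by
    change mapGL (g * h) _ = _
    rw [mapGL_mul, hh, hg]
  one_mem' := mapGL_one _
  inv_mem' := mapGL_inv_of_eq

theorem mem_stdLatticeStabilizer {g : GL (Fin n) (𝒦)} :
    g ∈ stdLatticeStabilizer F n ↔ mapGL g (stdLattice F n) = stdLattice F n :=
  Iff.rfl

theorem addVal_entry_nonneg_of_mem_stdLatticeStabilizer {g : GL (Fin n) (𝒦)}
    (hg : g ∈ stdLatticeStabilizer F n) (i j : Fin n) :
    0 ≤ addVal ℤ F ((g : Matrix (Fin n) (Fin n) 𝒦) i j) := by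
  have hcol : (g : Matrix (Fin n) (Fin n) 𝒦) *ᵥ Pi.single j 1 ∈ stdLattice F n := by
    rw [← mem_stdLatticeStabilizer.mp hg]
    exact ⟨Pi.single j 1, Submodule.subset_span ⟨j, rfl⟩, rfl⟩
  simpa using addVal_nonneg_of_mem_stdLattice hcol i

theorem addVal_det_eq_zero_of_mem_stdLatticeStabilizer {g : GL (Fin n) (𝒦)}
    (hg : g ∈ stdLatticeStabilizer F n) : addVal ℤ F (g : Matrix (Fin n) (Fin n) 𝒦).det = 0 := by
  have hsum : addVal ℤ F (g : Matrix (Fin n) (Fin n) 𝒦).det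
      + addVal ℤ F ((g⁻¹ : GL (Fin n) 𝒦) : Matrix (Fin n) (Fin n) 𝒦).det = 0 := by
    rw [← AddValuation.map_mul, ← det_mul, ← Units.val_mul, mul_inv_cancel, Units.val_one,
      det_one, AddValuation.map_one]
  have hg_nonneg := (addVal ℤ F).map_det_nonneg (addVal_entry_nonneg_of_mem_stdLatticeStabilizer hg)
  have hg_inv_nonneg := (addVal ℤ F).map_det_nonneg
    (addVal_entry_nonneg_of_mem_stdLatticeStabilizer (inv_mem hg))
  exact ((add_eq_zero_iff_of_nonneg hg_nonneg hg_inv_nonneg).mp hsum).1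

def diagGL (a : Fin n → ℤ) : GL (Fin n) (𝒦) where
  val := diagonal fun i => HahnSeries.single (-a i) 1
  inv := diagonal fun i => HahnSeries.single (a i) 1
  val_inv := by simp [HahnSeries.single_mul_single]
  inv_val := by simp [HahnSeries.single_mul_single]

theorem coe_diagGL (a : Fin n → ℤ) :
    (diagGL (F := F) a : Matrix (Fin n) (Fin n) 𝒦) =
      diagonal fun i => HahnSeries.single (-a i) 1 :=
  rfl

theorem mapGL_diagGL_stdLattice (a : Fin n → ℤ) :
    mapGL (diagGL (F := F) a) (stdLattice F n) = diagLattice a := by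
  rw [stdLattice, diagLattice, mapGL, Submodule.map_span, ← Set.range_comp]
  congr 2
  ext i j
  by_cases hij : j = i
  · subst hij; simp [coe_diagGL]
  · simp [coe_diagGL, hij]

theorem addVal_det_diagGL (a : Fin n → ℤ) :
    addVal ℤ F (diagGL (F := F) a : Matrix (Fin n) (Fin n) 𝒦).det =
      ((-∑ i, a i : ℤ) : WithTop ℤ) := by
  simp only [coe_diagGL, det_diagonal, AddValuation.map_prod, addVal_single_one]
  rw [← WithTop.coe_sum, sum_neg_distrib]

theorem exists_mem_stdLatticeStabilizer_diagGL_eq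
    {L M N : Submodule 𝒪 (Fin n → 𝒦)} {a b c : Fin n → ℤ} {g₁ g₂ g₃ : GL (Fin n) 𝒦}
    (h₁L : mapGL g₁ L = stdLattice F n) (h₁M : mapGL g₁ M = diagLattice a)
    (h₂M : mapGL g₂ M = stdLattice F n) (h₂N : mapGL g₂ N = diagLattice b)
    (h₃L : mapGL g₃ L = stdLattice F n) (h₃N : mapGL g₃ N = diagLattice c) :
    ∃ k₀ ∈ stdLatticeStabilizer F n, ∃ k₁ ∈ stdLatticeStabilizer F n,
      ∃ k₂ ∈ stdLatticeStabilizer F n, diagGL c = k₀ * (diagGL a * k₁ * diagGL b) * k₂ := by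
  refine ⟨g₃ * g₁⁻¹, ?_, (g₂ * g₁⁻¹ * diagGL a)⁻¹, inv_mem ?_,
    ((diagGL c)⁻¹ * g₃ * g₂⁻¹ * diagGL b)⁻¹, inv_mem ?_, by group⟩ <;>
    simp only [mem_stdLatticeStabilizer, mapGL_mul, mapGL_diagGL_stdLattice]
  · rw [mapGL_inv_of_eq h₁L, h₃L]
  · rw [mapGL_inv_of_eq h₁M, h₂M]
  · rw [mapGL_inv_of_eq h₂N, h₃N, mapGL_inv_of_eq (mapGL_diagGL_stdLattice c)]

theorem sum_eq_add_of_diagGL_eq {a b c : Fin n → ℤ} {k₀ k₁ k₂ : GL (Fin n) 𝒦}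
    (hk₀ : k₀ ∈ stdLatticeStabilizer F n) (hk₁ : k₁ ∈ stdLatticeStabilizer F n)
    (hk₂ : k₂ ∈ stdLatticeStabilizer F n)
    (hD : diagGL c = k₀ * (diagGL a * k₁ * diagGL b) * k₂) :
    ∑ i, c i = ∑ i, a i + ∑ i, b i := by
  have hval := congrArg (fun g : GL (Fin n) 𝒦 => addVal ℤ F (g : Matrix (Fin n) (Fin n) 𝒦).det) hD
  simp only [Units.val_mul, det_mul, AddValuation.map_mul, addVal_det_diagGL,
    addVal_det_eq_zero_of_mem_stdLatticeStabilizer hk₀,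
    addVal_det_eq_zero_of_mem_stdLatticeStabilizer hk₁,
    addVal_det_eq_zero_of_mem_stdLatticeStabilizer hk₂] at hval
  norm_cast at hval
  linarith

theorem sum_castLE_le_add_of_diagGL_eq {a b c : Fin n → ℤ} (ha : Antitone a) (hb : Antitone b)
    {k₀ k₁ k₂ : GL (Fin n) 𝒦} (hk₀ : k₀ ∈ stdLatticeStabilizer F n)
    (hk₁ : k₁ ∈ stdLatticeStabilizer F n) (hk₂ : k₂ ∈ stdLatticeStabilizer F n)
    (hD : diagGL c = k₀ * (diagGL a * k₁ * diagGL b) * k₂) {l : ℕ} (hl : l ≤ n) :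
    ∑ i : Fin l, c (Fin.castLE hl i) ≤
      ∑ i : Fin l, a (Fin.castLE hl i) + ∑ i : Fin l, b (Fin.castLE hl i) := by
  have hmono {d : Fin n → ℤ} (hd : Antitone d) :
      Monotone (addVal ℤ F ∘ fun i => HahnSeries.single (-d i) 1) := fun i j hij => by
    simpa [addVal_single_one] using WithTop.coe_le_coe.mpr (neg_le_neg (hd hij))
  have hminor := ((AddValuation.minorsGE_diagonal_mul_mul_diagonal hl (hmono ha) (hmono hb)
    (addVal_entry_nonneg_of_mem_stdLatticeStabilizer hk₁)).mul_left
      (addVal_entry_nonneg_of_mem_stdLatticeStabilizer hk₀)).mul_right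
      (addVal_entry_nonneg_of_mem_stdLatticeStabilizer hk₂) (Fin.castLE hl) (Fin.castLE hl)
  rw [← coe_diagGL, ← coe_diagGL, ← Units.val_mul, ← Units.val_mul, ← Units.val_mul,
    ← Units.val_mul, ← hD, coe_diagGL, submatrix_diagonal _ _ (Fin.castLE_injective hl),
    det_diagonal, AddValuation.map_prod] at hminor
  simp only [Function.comp_apply, addVal_single_one] at hminor
  norm_cast at hminor
  simp only [sum_neg_distrib] at hminor
  linarith

end LaurentSeries

theorem dist_triangle_dominance_general {F : Type*} [Field F] {n : ℕ}
    (L M N : Submodule (PowerSeries F) (Fin n → LaurentSeries F))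
    (a b c : Fin n → ℤ) (ha : Antitone a) (hb : Antitone b)
    (g₁ g₂ g₃ : GL (Fin n) (LaurentSeries F))
    (h₁L : mapGL g₁ L = stdLattice F n) (h₁M : mapGL g₁ M = diagLattice a)
    (h₂M : mapGL g₂ M = stdLattice F n) (h₂N : mapGL g₂ N = diagLattice b)
    (h₃L : mapGL g₃ L = stdLattice F n) (h₃N : mapGL g₃ N = diagLattice c) :
    (∀ l : ℕ, l ≤ n →
      ∑ m ∈ Finset.univ.filter (fun m : Fin n => (m : ℕ) < l), c m ≤
        ∑ m ∈ Finset.univ.filter (fun m : Fin n => (m : ℕ) < l), (a m + b m)) ∧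
    ∑ m, c m = ∑ m, (a m + b m) := by
  obtain ⟨k₀, hk₀, k₁, hk₁, k₂, hk₂, hD⟩ :=
    exists_mem_stdLatticeStabilizer_diagGL_eq h₁L h₁M h₂M h₂N h₃L h₃N
  refine ⟨fun l hl => ?_, ?_⟩
  · rw [Fin.sum_filter_val_lt hl, Fin.sum_filter_val_lt hl, sum_add_distrib]
    exact sum_castLE_le_add_of_diagGL_eq ha hb hk₀ hk₁ hk₂ hD hl
  · rw [sum_add_distrib]
    exact sum_eq_add_of_diagGL_eq hk₀ hk₁ hk₂ hD

/-- Triangle inequality for the dominant-coweight distance on lattices: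
if `d(L,M) = a`, `d(M,N) = b`, `d(L,N) = c` (witnessed by simultaneous
diagonalizations), then `c ≤ a + b` in the dominance (coroot) order: all partial
sums satisfy `∑_{m<l} c m ≤ ∑_{m<l} (a m + b m)`, with equality of total sums. -/
theorem dist_triangle_dominance {F : Type*} [Field F] {n : ℕ}
    (L M N : Submodule (PowerSeries F) (Fin n → LaurentSeries F))
    (hL : IsLattice L) (hM : IsLattice M) (hN : IsLattice N)
    (a b c : Fin n → ℤ) (ha : Antitone a) (hb : Antitone b) (hc : Antitone c)
    (g₁ g₂ g₃ : GL (Fin n) (LaurentSeries F))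
    (h₁L : mapGL g₁ L = stdLattice F n) (h₁M : mapGL g₁ M = diagLattice a)
    (h₂M : mapGL g₂ M = stdLattice F n) (h₂N : mapGL g₂ N = diagLattice b)
    (h₃L : mapGL g₃ L = stdLattice F n) (h₃N : mapGL g₃ N = diagLattice c) :
    (∀ l : ℕ, l ≤ n →
      ∑ m ∈ Finset.univ.filter (fun m : Fin n => (m : ℕ) < l), c m ≤
        ∑ m ∈ Finset.univ.filter (fun m : Fin n => (m : ℕ) < l), (a m + b m)) ∧
    ∑ m, c m = ∑ m, (a m + b m) :=
  dist_triangle_dominance_general L M N a b c ha hb g₁ g₂ g₃ h₁L h₁M h₂M h₂N h₃L h₃N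

end
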